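/- arXiv:2212.10158 — 4 statements merged into one kernel-verified Lean document; each statement's English description precedes it below -/
import Mathlib

section
/- For any real matrix W and its entrywise absolute value W̄, and any positive integer ℓ, if |(W^ℓ)_{hk}| < (W̄^ℓ)_{hk} for all entries (h,k), then the spectral radius satisfies ρ(W) < ρ(W̄). -/
/-!
Take an eigenvector `x` of `W` for an eigenvalue `μ` with `|μ| = ρ(W)`. Entrywise,
`|μ|^ℓ |x| = |W^ℓ x| < W̄^ℓ |x|`, so in the Euclidean norm
`|μ|^ℓ ‖x‖ < ‖W̄^ℓ |x|‖ ≤ ‖W̄‖^ℓ ‖x‖`. Since `W̄` is symmetric, its operator norm is its spectral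
radius, hence `ρ(W) = |μ| < ‖W̄‖ = ρ(W̄)`.
-/

/-- The spectral radius of a real matrix. -/
noncomputable def specRad {n : ℕ} (M : Matrix (Fin n) (Fin n) ℝ) : ℝ :=
  sSup (abs '' spectrum ℝ M)

open Matrix WithLp

theorem EuclideanSpace.norm_lt_norm_of_abs_lt {ι : Type*} [Fintype ι] [Nonempty ι] {u v : ι → ℝ}
    (h : ∀ i, |u i| < |v i|) : ‖toLp 2 u‖ < ‖toLp 2 v‖ := by
  rw [EuclideanSpace.norm_eq, EuclideanSpace.norm_eq]
  refine Real.sqrt_lt_sqrt (by positivity) (Finset.sum_lt_sum_of_nonempty Finset.univ_nonempty ?_)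
  intro i _
  simpa only [PiLp.toLp_apply, Real.norm_eq_abs, sq_abs] using sq_lt_sq.mpr (h i)

namespace Matrix

theorem exists_pow_mulVec_eq_pow_smul_of_mem_spectrum {ι K : Type*} [Fintype ι]
    [DecidableEq ι] [Field K] {M : Matrix ι ι K} {μ : K} (hμ : μ ∈ spectrum K M) :
    ∃ x ≠ 0, ∀ k : ℕ, (M ^ k) *ᵥ x = μ ^ k • x := by
  rw [← spectrum_toLin', ← Module.End.hasEigenvalue_iff_mem_spectrum] at hμ
  obtain ⟨x, hx⟩ := hμ.exists_hasEigenvector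
  exact ⟨x, hx.2, fun k => by simpa [← toLin'_pow] using hx.pow_apply k⟩

theorem abs_mulVec_lt_mulVec_abs {m ι : Type*} [Fintype ι] {B C : Matrix m ι ℝ}
    (h : ∀ i j, |B i j| < C i j) {x : ι → ℝ} (hx : x ≠ 0) (i : m) :
    |(B *ᵥ x) i| < (C *ᵥ |x|) i := by
  obtain ⟨j, hj⟩ := Function.ne_iff.mp hx
  calc |(B *ᵥ x) i| ≤ ∑ j, |B i j * x j| := Finset.abs_sum_le_sum_abs _ _
    _ = ∑ j, |B i j| * |x| j := by simp only [abs_mul, Pi.abs_apply]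
    _ < (C *ᵥ |x|) i :=
      Finset.sum_lt_sum (fun k _ => mul_le_mul_of_nonneg_right (h i k).le (abs_nonneg _))
        ⟨j, Finset.mem_univ _, mul_lt_mul_of_pos_right (h i j) (abs_pos.mpr hj)⟩

variable {n : ℕ}

theorem abs_le_specRad (M : Matrix (Fin n) (Fin n) ℝ) {μ : ℝ} (hμ : μ ∈ spectrum ℝ M) :
    |μ| ≤ specRad M :=
  le_csSup (M.finite_real_spectrum.image _).bddAbove ⟨μ, hμ, rfl⟩

theorem specRad_nonneg (M : Matrix (Fin n) (Fin n) ℝ) : 0 ≤ specRad M :=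
  Real.sSup_nonneg fun _ ⟨μ, _, hμ⟩ => hμ ▸ abs_nonneg μ

theorem exists_mem_spectrum_abs_eq_specRad (M : Matrix (Fin n) (Fin n) ℝ)
    (hM : (spectrum ℝ M).Nonempty) : ∃ μ ∈ spectrum ℝ M, |μ| = specRad M := by
  obtain ⟨μ, hμ, hmax⟩ := Set.exists_max_image _ abs (Set.toFinite _) hM
  have hgreatest : IsGreatest (abs '' spectrum ℝ M) |μ| := by
    refine ⟨⟨μ, hμ, rfl⟩, ?_⟩
    rintro _ ⟨ν, hν, rfl⟩
    exact hmax ν hν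
  exact ⟨μ, hμ, hgreatest.csSup_eq.symm⟩

theorem opNorm_toEuclideanCLM_le_specRad {A : Matrix (Fin n) (Fin n) ℝ} (hA : A.IsSymm) :
    ‖toEuclideanCLM (𝕜 := ℝ) A‖ ≤ specRad A := by
  have hT := (toEuclideanCLM (𝕜 := ℝ) A).spectralRadius_eq_nnnorm
    ((isHermitian_iff_isSymm.mpr hA).isSelfAdjoint.map _)
  have hle : spectralRadius ℝ (toEuclideanCLM (𝕜 := ℝ) A) ≤ ENNReal.ofReal (specRad A) := by
    refine iSup₂_le fun μ hμ => ?_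
    rw [AlgEquiv.spectrum_eq] at hμ
    rw [← ENNReal.ofReal_coe_nnreal, coe_nnnorm]
    exact ENNReal.ofReal_le_ofReal (abs_le_specRad A hμ)
  rwa [hT, ← ENNReal.ofReal_coe_nnreal, coe_nnnorm,
    ENNReal.ofReal_le_ofReal_iff (specRad_nonneg A)] at hle

end Matrix

theorem entrywise_lt_spectral_radius_general {n : ℕ} (hn : 0 < n)
    (W : Matrix (Fin n) (Fin n) ℝ) (hW : W.IsSymm) (ℓ : ℕ)
    (h : ∀ h' k : Fin n, |(W ^ ℓ) h' k| < ((Matrix.of fun a b => |W a b|) ^ ℓ) h' k) :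
    specRad W < specRad (Matrix.of fun a b => |W a b|) := by
  have : Nonempty (Fin n) := ⟨⟨0, hn⟩⟩
  set A := Matrix.of fun a b => |W a b|
  set T := toEuclideanCLM (𝕜 := ℝ) A
  obtain ⟨μ, hμ, hμW⟩ := W.exists_mem_spectrum_abs_eq_specRad
    ⟨_, (isHermitian_iff_isSymm.mpr hW).eigenvalues_mem_spectrum_real ⟨0, hn⟩⟩
  obtain ⟨x, hx0, hx⟩ := exists_pow_mulVec_eq_pow_smul_of_mem_spectrum hμ
  have hdom : ∀ i, |(|μ| ^ ℓ • |x|) i| < |(A ^ ℓ *ᵥ |x|) i| := fun i => calc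
    |(|μ| ^ ℓ • |x|) i| = |(W ^ ℓ *ᵥ x) i| := by simp [hx, abs_mul, abs_pow]
    _ < (A ^ ℓ *ᵥ |x|) i := abs_mulVec_lt_mulVec_abs h hx0 i
    _ ≤ |(A ^ ℓ *ᵥ |x|) i| := le_abs_self _
  have hnorm : |μ| ^ ℓ * ‖toLp 2 |x|‖ < ‖T‖ ^ ℓ * ‖toLp 2 |x|‖ := calc
    |μ| ^ ℓ * ‖toLp 2 |x|‖ = ‖toLp 2 (|μ| ^ ℓ • |x|)‖ := by
      rw [toLp_smul, norm_smul, Real.norm_eq_abs, abs_pow, abs_abs]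
    _ < ‖(T ^ ℓ) (toLp 2 |x|)‖ := by
      rw [← map_pow]
      exact EuclideanSpace.norm_lt_norm_of_abs_lt hdom
    _ ≤ ‖T ^ ℓ‖ * ‖toLp 2 |x|‖ := (T ^ ℓ).le_opNorm _
    _ ≤ ‖T‖ ^ ℓ * ‖toLp 2 |x|‖ := by gcongr; exact norm_pow_le T ℓ
  rw [← hμW]
  exact (lt_of_pow_lt_pow_left₀ ℓ (norm_nonneg T) (lt_of_mul_lt_mul_right hnorm (norm_nonneg _)))
    |>.trans_le (opNorm_toEuclideanCLM_le_specRad (hW.map abs))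

/-- If for some positive ℓ every entry satisfies |(W^ℓ)_{hk}| < (W̄^ℓ)_{hk},
then ρ(W) < ρ(W̄). -/
theorem entrywise_lt_spectral_radius {n : ℕ} (hn : 0 < n)
    (W : Matrix (Fin n) (Fin n) ℝ) (hW : W.IsSymm) (ℓ : ℕ) (hℓ : 0 < ℓ)
    (h : ∀ h' k : Fin n, |(W ^ ℓ) h' k| < ((Matrix.of fun a b => |W a b|) ^ ℓ) h' k) :
    specRad W < specRad (Matrix.of fun a b => |W a b|) :=
  entrywise_lt_spectral_radius_general hn W hW ℓ h
end

section
/- Suppose a connected signed graph G is structurally balanced and its underlying unsigned graph is non-bipartite with aperiodic normalized adjacency. Then P^t = D^{-1/2} P_sym^t D^{1/2} converges as t → ∞ to the rank-one matrix (1/(2m)) 1₁ 1₁^T D, where 1₁ is the ±1 vector of the balanced bipartition and 2m = Σ_j d_j; hence for any initial row vector x(0)^T, the limit of x(0)^T P^t is the vector with j-th entry ±(x(0)^T 1₁) d_j/(2m), with sign + if j ∈ V1 and − if j ∈ V2. -/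
/-!
Conjugating by the signs `σ` of the balanced bipartition turns `W` into the unsigned matrix `|W|`:
`σ i * W i j * σ j = |W i j|`. Hence `v = σ ⊙ √d` is fixed by `P_sym`, and a fixed vector `u` of
`P_sym` gives a `|W|`-harmonic function `σ ⊙ u / √d`, which is constant on the connected graph by
the maximum principle; so `1` is a simple eigenvalue of `P_sym` with eigenvector `v`. Diagonalising
the symmetric `P_sym`, whose other eigenvalues have modulus `< 1`, its powers converge to the
orthogonal projection `v vᵀ / ‖v‖²` with `‖v‖² = Σ d = 2m`, and `Pᵗ = D^{-1/2} P_symᵗ D^{1/2}`.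
-/

open Filter Topology Matrix

theorem mul_eq_of_tendsto_pow {M : Type*} [Monoid M] [TopologicalSpace M] [ContinuousMul M]
    [T2Space M] {a q : M} (h : Tendsto (a ^ ·) atTop (𝓝 q)) : a * q = q := by
  refine tendsto_nhds_unique ?_ (h.comp (tendsto_add_atTop_nat 1))
  simpa only [Function.comp_def, pow_succ'] using (tendsto_const_nhds (x := a)).mul h

theorem Filter.Tendsto.conj_pow {M : Type*} [Monoid M] [TopologicalSpace M] [ContinuousMul M]
    {u u' a q : M} (hu : u * u' = 1) (hu' : u' * u = 1) (h : Tendsto (a ^ ·) atTop (𝓝 q)) :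
    Tendsto (fun t : ℕ => (u * a * u') ^ t) atTop (𝓝 (u * q * u')) := by
  have hpow (t : ℕ) : (u * a * u') ^ t = u * a ^ t * u' := Units.conj_pow ⟨u, u', hu, hu'⟩ a t
  simpa only [hpow] using (tendsto_const_nhds.mul h).mul tendsto_const_nhds

theorem mul_mul_eq_abs_of_balanced {w s t : ℝ} (hs : s = 1 ∨ s = -1) (ht : t = 1 ∨ t = -1)
    (hpos : 0 < w → s = t) (hneg : w < 0 → s ≠ t) : s * w * t = |w| := by
  rcases lt_trichotomy w 0 with h | rfl | h
  · have hst := hneg h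
    rcases hs with rfl | rfl <;> rcases ht with rfl | rfl <;>
      first | exact absurd rfl hst | norm_num [abs_of_neg h]
  · simp
  · obtain rfl := hpos h
    rcases hs with rfl | rfl <;> simp [abs_of_pos h]

variable {ι : Type*} [Fintype ι]

theorem Matrix.eq_smul_vecMulVec_of_col_eq_smul {Q : Matrix ι ι ℝ} {v : ι → ℝ} (hQ : Q.IsSymm)
    (hQv : Q *ᵥ v = v) (hcol : ∀ j, ∃ c : ℝ, Q.col j = c • v) :
    Q = (v ⬝ᵥ v)⁻¹ • vecMulVec v v := by
  ext i j
  obtain ⟨c, hc⟩ := hcol j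
  have hQij : ∀ k, Q k j = c * v k := fun k => congrFun hc k
  have hvj : v j = c * (v ⬝ᵥ v) := by
    calc v j = ∑ k, Q j k * v k := (congrFun hQv j).symm
      _ = ∑ k, Q k j * v k := by simp only [hQ.apply]
      _ = c * (v ⬝ᵥ v) := by simp only [hQij, dotProduct, Finset.mul_sum, mul_assoc]
  rcases eq_or_ne (v ⬝ᵥ v) 0 with h | h
  · simp [hQij, dotProduct_self_eq_zero.1 h]
  · simp only [hQij, hvj, smul_apply, vecMulVec_apply, smul_eq_mul]
    field_simp

section SignedGraph

variable (W : Matrix ι ι ℝ) {d σ : ι → ℝ}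

theorem mulVec_sign_mul_sqrt_eq_self (hdef : ∀ i, d i = ∑ k, |W i k|) (hd : ∀ i, 0 < d i)
    (hσ : ∀ i, σ i * σ i = 1) (hbal : ∀ i j, σ i * W i j * σ j = |W i j|) :
    (of fun i j => W i j / (√(d i) * √(d j))) *ᵥ (fun i => σ i * √(d i)) =
      fun i => σ i * √(d i) := by
  funext i
  have hterm : ∀ j, W i j / (√(d i) * √(d j)) * (σ j * √(d j)) = |W i j| * σ i / √(d i) := by
    intro j
    have hi : √(d i) ≠ 0 := (Real.sqrt_pos.2 (hd i)).ne'
    have hj : √(d j) ≠ 0 := (Real.sqrt_pos.2 (hd j)).ne'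
    rw [← hbal i j]
    field_simp
    linear_combination -(W i j * σ j) * hσ i
  calc ∑ j, W i j / (√(d i) * √(d j)) * (σ j * √(d j)) = ∑ j, |W i j| * σ i / √(d i) :=
        Finset.sum_congr rfl fun j _ => hterm j
    _ = d i * σ i / √(d i) := by rw [hdef i, Finset.sum_mul, Finset.sum_div]
    _ = σ i * √(d i) := by rw [mul_comm, mul_div_assoc, Real.div_sqrt]

theorem dotProduct_sign_mul_sqrt_self (hd : ∀ i, 0 < d i) (hσ : ∀ i, σ i * σ i = 1) :
    (fun i => σ i * √(d i)) ⬝ᵥ (fun i => σ i * √(d i)) = ∑ i, d i := by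
  refine Finset.sum_congr rfl fun i _ => ?_
  rw [mul_mul_mul_comm, hσ i, one_mul, Real.mul_self_sqrt (hd i).le]

end SignedGraph

variable [DecidableEq ι]

theorem Matrix.exists_const_of_mulVec_eq_rowSum_mul {A : Matrix ι ι ℝ} (hA : ∀ i j, 0 ≤ A i j)
    (hconn : ∀ i j, ∃ m : ℕ, (A ^ m) i j ≠ 0) {y : ι → ℝ}
    (hy : ∀ i, (A *ᵥ y) i = (∑ j, A i j) * y i) : ∃ c, ∀ i, y i = c := by
  rcases isEmpty_or_nonempty ι with hι | hι
  · exact ⟨0, isEmptyElim⟩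
  obtain ⟨i₀, hmax⟩ := Finite.exists_max y
  have hspread : ∀ k, y k = y i₀ → ∀ j, A k j ≠ 0 → y j = y i₀ := by
    intro k hk j hkj
    have hsum : ∑ j, A k j * (y i₀ - y j) = 0 := by
      simp only [mul_sub, Finset.sum_sub_distrib, ← Finset.sum_mul, ← hk]
      rw [← hy k]
      simp only [mulVec, dotProduct, sub_self]
    have hterm := (Finset.sum_eq_zero_iff_of_nonneg fun j _ =>
      mul_nonneg (hA k j) (sub_nonneg.2 (hmax j))).1 hsum j (Finset.mem_univ j)
    linarith [(mul_eq_zero.1 hterm).resolve_left hkj]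
  have hreach : ∀ m k, (A ^ m) i₀ k ≠ 0 → y k = y i₀ := by
    intro m
    induction m with
    | zero =>
      intro k hk
      obtain rfl : i₀ = k := by_contra fun h => hk (one_apply_ne h)
      rfl
    | succ m ih =>
      intro k hk
      rw [pow_succ, mul_apply] at hk
      obtain ⟨l, -, hl⟩ := Finset.exists_ne_zero_of_sum_ne_zero hk
      exact hspread l (ih l (left_ne_zero_of_mul hl)) k (right_ne_zero_of_mul hl)
  exact ⟨y i₀, fun i => (hconn i₀ i).elim fun m hm => hreach m i hm⟩

theorem Matrix.IsHermitian.exists_tendsto_pow {S : Matrix ι ι ℝ} (hS : S.IsHermitian)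
    (hspec : ∀ μ ∈ spectrum ℝ S, μ ≠ 1 → |μ| < 1) :
    ∃ Q, Tendsto (fun t : ℕ => S ^ t) atTop (𝓝 Q) := by
  set φ := Unitary.conjStarAlgAut ℝ (Matrix ι ι ℝ) hS.eigenvectorUnitary
  have hpow : ∀ t : ℕ, S ^ t = φ (diagonal fun i => hS.eigenvalues i ^ t) := by
    intro t
    conv_lhs => rw [hS.spectral_theorem]
    rw [← map_pow, diagonal_pow]
    rfl
  have hφ : Continuous φ := (continuous_const.mul continuous_id).mul continuous_const
  have heig : ∀ i, Tendsto (fun t : ℕ => hS.eigenvalues i ^ t) atTop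
      (𝓝 (if hS.eigenvalues i = 1 then 1 else 0)) := by
    intro i
    split_ifs with h
    · simp only [h, one_pow, tendsto_const_nhds]
    · exact tendsto_pow_atTop_nhds_zero_of_abs_lt_one
        (hspec _ (hS.eigenvalues_mem_spectrum_real i) h)
  simp only [hpow]
  exact ⟨_, (hφ.tendsto _).comp ((continuous_id.matrix_diagonal.tendsto _).comp
    (tendsto_pi_nhds.2 heig))⟩

theorem Matrix.IsSymm.tendsto_pow_smul_vecMulVec {S : Matrix ι ι ℝ} (hS : S.IsSymm)
    (hspec : ∀ μ ∈ spectrum ℝ S, μ ≠ 1 → |μ| < 1) {v : ι → ℝ} (hSv : S *ᵥ v = v)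
    (hfix : ∀ u, S *ᵥ u = u → ∃ c : ℝ, u = c • v) :
    Tendsto (fun t : ℕ => S ^ t) atTop (𝓝 ((v ⬝ᵥ v)⁻¹ • vecMulVec v v)) := by
  obtain ⟨Q, hQ⟩ := (isHermitian_iff_isSymm.2 hS).exists_tendsto_pow hspec
  convert hQ
  have hSQ : S * Q = Q := mul_eq_of_tendsto_pow hQ
  have hQsymm : Q.IsSymm :=
    (isClosed_eq continuous_id.matrix_transpose continuous_id).mem_of_tendsto hQ
      (Eventually.of_forall hS.pow)
  have hSv_pow : ∀ t : ℕ, S ^ t *ᵥ v = v := by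
    intro t
    induction t with
    | zero => exact one_mulVec v
    | succ t ih => rw [pow_succ', ← mulVec_mulVec, ih, hSv]
  have hQv : Q *ᵥ v = v :=
    (isClosed_eq (continuous_id.matrix_mulVec continuous_const) continuous_const).mem_of_tendsto
      hQ (Eventually.of_forall hSv_pow)
  refine (eq_smul_vecMulVec_of_col_eq_smul hQsymm hQv fun j => hfix _ ?_).symm
  rw [← mulVec_single_one, mulVec_mulVec, hSQ]

section SignedGraph

variable (W : Matrix ι ι ℝ) {d σ : ι → ℝ}

theorem exists_eq_smul_sign_mul_sqrt_of_mulVec_eq_self (hdef : ∀ i, d i = ∑ k, |W i k|)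
    (hd : ∀ i, 0 < d i) (hconn : ∀ i j, ∃ m : ℕ, ((of fun a b => |W a b|) ^ m) i j ≠ 0)
    (hσ : ∀ i, σ i * σ i = 1) (hbal : ∀ i j, σ i * W i j * σ j = |W i j|) {u : ι → ℝ}
    (hu : (of fun i j => W i j / (√(d i) * √(d j))) *ᵥ u = u) :
    ∃ c : ℝ, u = c • fun i => σ i * √(d i) := by
  have hsqrt : ∀ i, √(d i) ≠ 0 := fun i => (Real.sqrt_pos.2 (hd i)).ne'
  have hharm : ∀ i, ((of fun a b => |W a b|) *ᵥ fun j => σ j * u j / √(d j)) i =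
      (∑ j, |W i j|) * (σ i * u i / √(d i)) := by
    intro i
    have hterm : ∀ j, |W i j| * (σ j * u j / √(d j)) =
        σ i * √(d i) * (W i j / (√(d i) * √(d j)) * u j) := by
      intro j
      rw [← hbal i j]
      field_simp [hsqrt i, hsqrt j]
      linear_combination σ i * W i j * u j * hσ j
    have hui := congrFun hu i
    simp only [mulVec, dotProduct, of_apply] at hui ⊢
    rw [Finset.sum_congr rfl fun j _ => hterm j, ← Finset.mul_sum, hui, ← hdef i]
    field_simp [hsqrt i]
    rw [Real.sq_sqrt (hd i).le]
    ring
  obtain ⟨c, hc⟩ :=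
    Matrix.exists_const_of_mulVec_eq_rowSum_mul (fun _ _ => abs_nonneg _) hconn hharm
  refine ⟨c, funext fun i => ?_⟩
  have hci := hc i
  field_simp [hsqrt i] at hci
  simp only [Pi.smul_apply, smul_eq_mul]
  linear_combination (-u i) * hσ i + σ i * hci

theorem of_div_eq_diagonal_mul_mul_diagonal (hd : ∀ i, 0 < d i) :
    (of fun i j => W i j / d i) = diagonal (fun i => (√(d i))⁻¹) *
      (of fun i j => W i j / (√(d i) * √(d j))) * diagonal fun i => √(d i) := by
  ext i j
  have hdi : d i ≠ 0 := (hd i).ne'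
  have hi : √(d i) ≠ 0 := (Real.sqrt_pos.2 (hd i)).ne'
  have hj : √(d j) ≠ 0 := (Real.sqrt_pos.2 (hd j)).ne'
  simp only [diagonal_mul, mul_diagonal, of_apply]
  field_simp
  rw [Real.sq_sqrt (hd i).le]

theorem diagonal_mul_smul_vecMulVec_sign_mul_sqrt_mul_diagonal (hd : ∀ i, 0 < d i)
    (hσ : ∀ i, σ i * σ i = 1) :
    diagonal (fun i => (√(d i))⁻¹) *
        ((fun i => σ i * √(d i)) ⬝ᵥ (fun i => σ i * √(d i)))⁻¹ •
          vecMulVec (fun i => σ i * √(d i)) (fun i => σ i * √(d i)) *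
        diagonal (fun i => √(d i)) =
      of fun i j => σ i * σ j * d j / ∑ k, d k := by
  ext i j
  have hi : √(d i) ≠ 0 := (Real.sqrt_pos.2 (hd i)).ne'
  simp only [diagonal_mul, mul_diagonal, Matrix.smul_apply, vecMulVec_apply, of_apply,
    smul_eq_mul, dotProduct_sign_mul_sqrt_self hd hσ]
  field_simp
  rw [Real.sq_sqrt (hd j).le]

end SignedGraph

/-- For a connected structurally balanced signed graph whose symmetrized
transition matrix has all eigenvalues other than 1 of absolute value < 1
(non-bipartite, aperiodic case), the powers P^t converge to the rank-one matrix
(1/(2m)) 1₁ 1₁ᵀ D, and accordingly x(0)ᵀ P^t converges to the stated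
stationary vector. -/
theorem balanced_random_walk_stationary {n : ℕ} (W : Matrix (Fin n) (Fin n) ℝ)
    (hW : W.IsSymm)
    (d : Fin n → ℝ) (hdef : ∀ i, d i = ∑ k, |W i k|) (hd : ∀ i, 0 < d i)
    (hconn : ∀ i j : Fin n, ∃ m : ℕ, ((Matrix.of fun a b => |W a b|) ^ m) i j ≠ 0)
    (σ : Fin n → ℝ) (hσ : ∀ i, σ i = 1 ∨ σ i = -1)
    (hbal1 : ∀ i j, 0 < W i j → σ i = σ j)
    (hbal2 : ∀ i j, W i j < 0 → σ i ≠ σ j)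
    (haper : ∀ μ ∈ spectrum ℝ
        (Matrix.of fun i j => W i j / (Real.sqrt (d i) * Real.sqrt (d j))),
      μ ≠ 1 → |μ| < 1) :
    Tendsto (fun t : ℕ => (Matrix.of fun i j => W i j / d i) ^ t) atTop
      (nhds (Matrix.of fun i j => σ i * σ j * d j / ∑ k, d k)) ∧
    ∀ x0 : Fin n → ℝ,
      Tendsto (fun t : ℕ => Matrix.vecMul x0 ((Matrix.of fun i j => W i j / d i) ^ t))
        atTop (nhds (fun j => (∑ i, x0 i * σ i) * σ j * d j / ∑ k, d k)) := by
  have hσσ : ∀ i, σ i * σ i = 1 := fun i => by rcases hσ i with h | h <;> simp [h]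
  have hbal : ∀ i j, σ i * W i j * σ j = |W i j| := fun i j =>
    mul_mul_eq_abs_of_balanced (hσ i) (hσ j) (hbal1 i j) (hbal2 i j)
  have hS : (of fun i j => W i j / (√(d i) * √(d j))).IsSymm :=
    IsSymm.ext fun i j => by simp only [of_apply, hW.apply, mul_comm]
  have hsqrt : ∀ i, √(d i) ≠ 0 := fun i => (Real.sqrt_pos.2 (hd i)).ne'
  have hlim : Tendsto (fun t : ℕ => (of fun i j => W i j / d i) ^ t) atTop
      (𝓝 (of fun i j => σ i * σ j * d j / ∑ k, d k)) := by
    have h := (hS.tendsto_pow_smul_vecMulVec haper (mulVec_sign_mul_sqrt_eq_self W hdef hd hσσ hbal)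
      fun u => exists_eq_smul_sign_mul_sqrt_of_mulVec_eq_self W hdef hd hconn hσσ hbal).conj_pow
      (u := diagonal fun i => (√(d i))⁻¹) (u' := diagonal fun i => √(d i))
      (by simp [hsqrt]) (by simp [hsqrt])
    rwa [← of_div_eq_diagonal_mul_mul_diagonal W hd,
      diagonal_mul_smul_vecMulVec_sign_mul_sqrt_mul_diagonal hd hσσ] at h
  refine ⟨hlim, fun x0 => ?_⟩
  have hvec : Continuous fun M : Matrix (Fin n) (Fin n) ℝ => x0 ᵥ* M :=
    continuous_const.matrix_vecMul continuous_id
  have hval : x0 ᵥ* (of fun i j => σ i * σ j * d j / ∑ k, d k) =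
      fun j => (∑ i, x0 i * σ i) * σ j * d j / ∑ k, d k := by
    ext j
    simp only [vecMul, dotProduct, of_apply, Finset.sum_mul, Finset.sum_div]
    exact Finset.sum_congr rfl fun i _ => by ring
  exact hval ▸ (hvec.tendsto _).comp hlim
end

section
/- If G is strictly unbalanced (neither balanced nor antibalanced) and connected, then ρ(P_sym) < 1 and consequently P^t → 0 as t → ∞; i.e., for any initial vector x(0), the random walk state x(0)^T P^t converges to the zero vector. -/
/-!
Put `y = D^{-1/2} v` for an eigenvector `v` of `P_sym` with eigenvalue `μ`. Then
`yᵀWy = μ · yᵀDy`, while `2 (yᵀDy ∓ yᵀWy) = ∑ᵢⱼ (|Wᵢⱼ| (yᵢ² + yⱼ²) ∓ 2 Wᵢⱼ yᵢ yⱼ) ≥ 0`,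
so `|μ| ≤ 1`. If `μ = ±1`, every summand vanishes: `|yᵢ| = |yⱼ|` along each edge, hence `|y|` is
constant by connectivity, and `σ = y / |y|` is a switching function balancing `W` (resp. `-W`).
Thus the spectrum of the symmetric matrix `P_sym` lies in `(-1, 1)`, so `P_sym^t → 0` by the
spectral theorem, and `P = D^{-1/2} P_sym D^{1/2}` inherits this.
-/

open Filter Matrix

theorem SemiconjBy.tendsto_pow_nhds_zero {M : Type*} [MonoidWithZero M] [TopologicalSpace M]
    [ContinuousMul M] {a b x y : M} (h : SemiconjBy a x y) (hab : a * b = 1)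
    (hx : Tendsto (fun t : ℕ => x ^ t) atTop (nhds 0)) :
    Tendsto (fun t : ℕ => y ^ t) atTop (nhds 0) := by
  have hy : ∀ t : ℕ, y ^ t = a * x ^ t * b := fun t => by
    rw [(h.pow_right t).eq, mul_assoc, hab, mul_one]
  simpa [hy] using (tendsto_const_nhds.mul hx).mul (tendsto_const_nhds (x := b))

theorem two_mul_mul_mul_le_abs_mul_sq_add_sq (w a b : ℝ) :
    2 * w * a * b ≤ |w| * (a ^ 2 + b ^ 2) := by
  have hab : 2 * |a| * |b| ≤ a ^ 2 + b ^ 2 := by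
    nlinarith [sq_nonneg (|a| - |b|), sq_abs a, sq_abs b]
  calc 2 * w * a * b ≤ |2 * w * a * b| := le_abs_self _
    _ = |w| * (2 * |a| * |b|) := by simp only [abs_mul, abs_two]; ring
    _ ≤ |w| * (a ^ 2 + b ^ 2) := mul_le_mul_of_nonneg_left hab (abs_nonneg w)

theorem specRad_lt_of_forall_abs_lt {n : ℕ} {M : Matrix (Fin n) (Fin n) ℝ} {r : ℝ} (hr : 0 < r)
    (h : ∀ μ ∈ spectrum ℝ M, |μ| < r) : specRad M < r := by
  rcases (abs '' spectrum ℝ M).eq_empty_or_nonempty with hempty | hne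
  · rwa [specRad, hempty, Real.sSup_empty]
  · rw [specRad, (M.finite_spectrum.image _).csSup_lt_iff hne]
    rintro _ ⟨μ, hμ, rfl⟩
    exact h μ hμ

namespace Matrix

variable {ι : Type*}

def IsBalanced (W : Matrix ι ι ℝ) : Prop :=
  ∃ σ : ι → ℝ, (∀ i, σ i = 1 ∨ σ i = -1) ∧ ∀ i j, W i j = σ i * |W i j| * σ j

theorem isBalanced_neg_iff {W : Matrix ι ι ℝ} : IsBalanced (-W) ↔
    ∃ σ : ι → ℝ, (∀ i, σ i = 1 ∨ σ i = -1) ∧ ∀ i j, W i j = -(σ i * |W i j| * σ j) := by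
  simp only [IsBalanced, neg_apply, abs_neg, neg_eq_iff_eq_neg]

theorem isSymm_normalized {W : Matrix ι ι ℝ} {d : ι → ℝ} (hW : W.IsSymm) :
    (of fun i j => W i j / (√(d i) * √(d j))).IsSymm := by
  ext i j
  simp only [transpose_apply, of_apply, hW.apply, mul_comm]

variable [Fintype ι]

theorem apply_eq_of_pow_apply_ne_zero [DecidableEq ι] {R α : Type*} [Semiring R]
    {B : Matrix ι ι R} {f : ι → α} (h : ∀ i j, B i j ≠ 0 → f i = f j) :
    ∀ {m : ℕ} {i j : ι}, (B ^ m) i j ≠ 0 → f i = f j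
  | 0, i, j, hij => by
    rw [pow_zero, one_apply] at hij
    exact congrArg f (of_not_not fun hne => hij (if_neg hne))
  | m + 1, i, j, hij => by
    rw [pow_succ, mul_apply] at hij
    obtain ⟨k, -, hk⟩ := Finset.exists_ne_zero_of_sum_ne_zero hij
    exact (apply_eq_of_pow_apply_ne_zero h (left_ne_zero_of_mul hk)).trans
      (h k j (right_ne_zero_of_mul hk))

theorem IsHermitian.tendsto_pow_nhds_zero {𝕜 : Type*} [RCLike 𝕜] [DecidableEq ι]
    {A : Matrix ι ι 𝕜} (hA : A.IsHermitian) (h : ∀ i, |hA.eigenvalues i| < 1) :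
    Tendsto (fun t : ℕ => A ^ t) atTop (nhds 0) := by
  have hdiag : Tendsto (fun t : ℕ => diagonal ((RCLike.ofReal ∘ hA.eigenvalues : ι → 𝕜) ^ t))
      atTop (nhds 0) := by
    rw [← diagonal_zero]
    refine (continuous_id.matrix_diagonal).continuousAt.tendsto.comp (tendsto_pi_nhds.2 fun i => ?_)
    refine tendsto_pow_atTop_nhds_zero_of_norm_lt_one ?_
    simpa using h i
  have hpow : ∀ t : ℕ, A ^ t = hA.eigenvectorUnitary *
      diagonal ((RCLike.ofReal ∘ hA.eigenvalues : ι → 𝕜) ^ t) * star hA.eigenvectorUnitary := by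
    intro t
    conv_lhs => rw [hA.spectral_theorem]
    rw [← map_pow, diagonal_pow, Unitary.conjStarAlgAut_apply, Unitary.coe_star]
  simpa [hpow] using (tendsto_const_nhds.mul hdiag).mul tendsto_const_nhds

section SignedGraph

variable {W : Matrix ι ι ℝ} {d : ι → ℝ}

theorem two_mul_sub_quadForm_eq_sum (hW : W.IsSymm) (hdef : ∀ i, d i = ∑ k, |W i k|)
    (y : ι → ℝ) :
    2 * (∑ i, d i * y i ^ 2 - ∑ i, ∑ j, W i j * y i * y j) =
      ∑ i, ∑ j, (|W i j| * (y i ^ 2 + y j ^ 2) - 2 * W i j * y i * y j) := by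
  have hrow : ∑ i, ∑ j, |W i j| * y i ^ 2 = ∑ i, d i * y i ^ 2 := by
    simp only [hdef, Finset.sum_mul]
  have hcol : ∑ i, ∑ j, |W i j| * y j ^ 2 = ∑ i, d i * y i ^ 2 := by
    rw [Finset.sum_comm]
    simp only [hdef, Finset.sum_mul, hW.apply]
  simp only [mul_add, Finset.sum_sub_distrib, Finset.sum_add_distrib, hrow, hcol, mul_assoc,
    ← Finset.mul_sum]
  ring

theorem quadForm_le_sum_mul_sq (hW : W.IsSymm) (hdef : ∀ i, d i = ∑ k, |W i k|) (y : ι → ℝ) :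
    ∑ i, ∑ j, W i j * y i * y j ≤ ∑ i, d i * y i ^ 2 := by
  have hnonneg : 0 ≤ ∑ i, ∑ j, (|W i j| * (y i ^ 2 + y j ^ 2) - 2 * W i j * y i * y j) :=
    Finset.sum_nonneg fun i _ => Finset.sum_nonneg fun j _ =>
      sub_nonneg.2 (two_mul_mul_mul_le_abs_mul_sq_add_sq _ _ _)
  linarith [two_mul_sub_quadForm_eq_sum hW hdef y]

theorem isBalanced_of_quadForm_eq [DecidableEq ι] (hW : W.IsSymm) (hdef : ∀ i, d i = ∑ k, |W i k|)
    (hconn : ∀ i j : ι, ∃ m : ℕ, ((of fun a b => |W a b|) ^ m) i j ≠ 0) {y : ι → ℝ} (hy : y ≠ 0)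
    (heq : ∑ i, ∑ j, W i j * y i * y j = ∑ i, d i * y i ^ 2) : IsBalanced W := by
  have hgap : ∀ i j, 0 ≤ |W i j| * (y i ^ 2 + y j ^ 2) - 2 * W i j * y i * y j := fun i j =>
    sub_nonneg.2 (two_mul_mul_mul_le_abs_mul_sq_add_sq _ _ _)
  have hedge : ∀ i j, |W i j| * (y i ^ 2 + y j ^ 2) = 2 * W i j * y i * y j := by
    have hzero := two_mul_sub_quadForm_eq_sum hW hdef y
    rw [heq, sub_self, mul_zero, eq_comm,
      Finset.sum_eq_zero_iff_of_nonneg fun i _ => Finset.sum_nonneg fun j _ => hgap i j] at hzero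
    intro i j
    have := (Finset.sum_eq_zero_iff_of_nonneg fun j _ => hgap i j).1
      (hzero i (Finset.mem_univ _)) j (Finset.mem_univ _)
    linarith
  have habs_edge : ∀ i j, W i j ≠ 0 → |y i| = |y j| := by
    intro i j hij
    have hle : W i j * y i * y j ≤ |W i j| * |y i| * |y j| := by
      simpa only [abs_mul] using le_abs_self (W i j * y i * y j)
    have hsq : |W i j| * (|y i| - |y j|) ^ 2 ≤ 0 := by
      have h := hedge i j
      rw [← sq_abs (y i), ← sq_abs (y j)] at h
      linear_combination h + 2 * hle
    have hsq' : (|y i| - |y j|) ^ 2 = 0 :=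
      le_antisymm (nonpos_of_mul_nonpos_right hsq (abs_pos.2 hij)) (sq_nonneg _)
    exact sub_eq_zero.1 (pow_eq_zero_iff two_ne_zero |>.1 hsq')
  have hconst : ∀ i j, |y i| = |y j| := fun i j =>
    (hconn i j).elim fun _ hm => apply_eq_of_pow_apply_ne_zero
      (B := of fun a b => |W a b|) (fun a b hab => habs_edge a b (by simpa using hab)) hm
  obtain ⟨i₀, hi₀⟩ := Function.ne_iff.1 hy
  have hc : 0 < |y i₀| := abs_pos.2 hi₀
  have hsq : ∀ i, y i ^ 2 = |y i₀| ^ 2 := fun i => by rw [← sq_abs, hconst i i₀]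
  refine ⟨fun i => y i / |y i₀|, fun i => ?_, fun i j => ?_⟩
  · refine (abs_eq zero_le_one).1 ?_
    rw [abs_div, hconst i i₀, abs_abs, div_self hc.ne']
  · have hc2 : 2 * |y i₀| ^ 2 ≠ 0 := by positivity
    rw [div_mul_eq_mul_div, div_mul_div_comm, eq_div_iff (by positivity), ← sq]
    refine mul_left_cancel₀ hc2 ?_
    have h := hedge i j
    rw [hsq i, hsq j] at h
    linear_combination -(y i * y j) * h - 2 * W i j * y j ^ 2 * hsq i
      - 2 * W i j * |y i₀| ^ 2 * hsq j

theorem dotProduct_normalized_mulVec (v : ι → ℝ) :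
    v ⬝ᵥ (of fun i j => W i j / (√(d i) * √(d j))) *ᵥ v =
      ∑ i, ∑ j, W i j * (v i / √(d i)) * (v j / √(d j)) := by
  simp only [dotProduct, mulVec, of_apply, Finset.mul_sum]
  refine Finset.sum_congr rfl fun i _ => Finset.sum_congr rfl fun j _ => ?_
  ring

theorem dotProduct_self_eq_sum_mul_sq_div_sqrt (hd : ∀ i, 0 < d i) (v : ι → ℝ) :
    v ⬝ᵥ v = ∑ i, d i * (v i / √(d i)) ^ 2 := by
  refine Finset.sum_congr rfl fun i _ => ?_
  rw [div_pow, Real.sq_sqrt (hd i).le, mul_div_cancel₀ _ (hd i).ne', ← sq]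

theorem abs_lt_one_of_normalized_mulVec_eq_smul [DecidableEq ι] (hW : W.IsSymm)
    (hdef : ∀ i, d i = ∑ k, |W i k|) (hd : ∀ i, 0 < d i)
    (hconn : ∀ i j : ι, ∃ m : ℕ, ((of fun a b => |W a b|) ^ m) i j ≠ 0)
    (hbal : ¬ IsBalanced W) (hanti : ¬ IsBalanced (-W)) {μ : ℝ} {v : ι → ℝ} (hv : v ≠ 0)
    (hμ : (of fun i j => W i j / (√(d i) * √(d j))) *ᵥ v = μ • v) : |μ| < 1 := by
  set y : ι → ℝ := fun i => v i / √(d i)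
  have hnorm := dotProduct_self_eq_sum_mul_sq_div_sqrt hd v
  have hS : 0 < ∑ i, d i * y i ^ 2 :=
    hnorm ▸ (Finset.sum_nonneg fun i _ => mul_self_nonneg (v i)).lt_of_ne
      (Ne.symm (dotProduct_self_eq_zero.not.2 hv))
  have hy : y ≠ 0 := fun h => by simp [h] at hS
  have hray : ∑ i, ∑ j, W i j * y i * y j = μ * ∑ i, d i * y i ^ 2 := by
    rw [← hnorm, ← dotProduct_normalized_mulVec, hμ, dotProduct_smul, smul_eq_mul]
  have hdef' : ∀ i, d i = ∑ k, |(-W) i k| := by simpa using hdef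
  have hconn' : ∀ i j : ι, ∃ m : ℕ, ((of fun a b => |(-W) a b|) ^ m) i j ≠ 0 := by
    simpa using hconn
  have hup := quadForm_le_sum_mul_sq hW hdef y
  have hdown := quadForm_le_sum_mul_sq hW.neg hdef' y
  simp only [neg_apply, neg_mul, Finset.sum_neg_distrib, hray] at hup hdown
  have hle : |μ| ≤ 1 := abs_le.2 ⟨by nlinarith, by nlinarith⟩
  refine hle.lt_of_ne fun h1 => ?_
  rcases (abs_eq zero_le_one).1 h1 with rfl | rfl
  · exact hbal (isBalanced_of_quadForm_eq hW hdef hconn hy (by rw [hray, one_mul]))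
  · exact hanti (isBalanced_of_quadForm_eq hW.neg hdef' hconn' hy (by simp [hray]))

theorem semiconjBy_normalized [DecidableEq ι] (hd : ∀ i, 0 < d i) :
    SemiconjBy (diagonal fun i => (√(d i))⁻¹) (of fun i j => W i j / (√(d i) * √(d j)))
      (of fun i j => W i j / d i) := by
  ext i j
  have hi : √(d i) ≠ 0 := (Real.sqrt_pos.2 (hd i)).ne'
  have hj : √(d j) ≠ 0 := (Real.sqrt_pos.2 (hd j)).ne'
  simp only [diagonal_mul, mul_diagonal, of_apply]
  field_simp
  rw [Real.sq_sqrt (hd i).le, mul_div_cancel_left₀ _ (hd i).ne']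

theorem diagonal_inv_sqrt_mul_diagonal_sqrt [DecidableEq ι] (hd : ∀ i, 0 < d i) :
    (diagonal fun i => (√(d i))⁻¹) * (diagonal fun i => √(d i)) = 1 := by
  rw [diagonal_mul_diagonal, ← diagonal_one]
  exact congrArg diagonal (funext fun i => inv_mul_cancel₀ (Real.sqrt_pos.2 (hd i)).ne')

end SignedGraph

end Matrix

/-- If a connected signed graph is strictly unbalanced (neither balanced nor
antibalanced), then ρ(P_sym) < 1 and the random walk state x(0)ᵀ P^t converges
to the zero vector. -/
theorem strictly_unbalanced_walk_to_zero {n : ℕ} (W : Matrix (Fin n) (Fin n) ℝ)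
    (hW : W.IsSymm)
    (d : Fin n → ℝ) (hdef : ∀ i, d i = ∑ k, |W i k|) (hd : ∀ i, 0 < d i)
    (hconn : ∀ i j : Fin n, ∃ m : ℕ, ((Matrix.of fun a b => |W a b|) ^ m) i j ≠ 0)
    (hnotbal : ¬ ∃ σ : Fin n → ℝ, (∀ i, σ i = 1 ∨ σ i = -1) ∧
      ∀ i j, W i j = σ i * |W i j| * σ j)
    (hnotanti : ¬ ∃ σ : Fin n → ℝ, (∀ i, σ i = 1 ∨ σ i = -1) ∧
      ∀ i j, W i j = -(σ i * |W i j| * σ j)) :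
    specRad (Matrix.of fun i j => W i j / (Real.sqrt (d i) * Real.sqrt (d j))) < 1 ∧
    Tendsto (fun t : ℕ => (Matrix.of fun i j => W i j / d i) ^ t) atTop (nhds 0) ∧
    ∀ x0 : Fin n → ℝ,
      Tendsto (fun t : ℕ => Matrix.vecMul x0 ((Matrix.of fun i j => W i j / d i) ^ t))
        atTop (nhds 0) := by
  set M : Matrix (Fin n) (Fin n) ℝ := of fun i j => W i j / (√(d i) * √(d j))
  have hM : M.IsHermitian := isHermitian_iff_isSymm.2 (isSymm_normalized hW)
  have hev : ∀ i, |hM.eigenvalues i| < 1 := fun i =>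
    abs_lt_one_of_normalized_mulVec_eq_smul hW hdef hd hconn hnotbal
      (fun h => hnotanti (isBalanced_neg_iff.1 h))
      (fun h => hM.eigenvectorBasis.orthonormal.ne_zero i (by ext j; exact congrFun h j))
      (hM.mulVec_eigenvectorBasis i)
  have hP : Tendsto (fun t : ℕ => (of fun i j => W i j / d i) ^ t) atTop (nhds 0) :=
    (semiconjBy_normalized hd).tendsto_pow_nhds_zero (diagonal_inv_sqrt_mul_diagonal_sqrt hd)
      (hM.tendsto_pow_nhds_zero hev)
  refine ⟨specRad_lt_of_forall_abs_lt one_pos ?_, hP, fun x0 => ?_⟩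
  · rw [hM.spectrum_real_eq_range_eigenvalues]
    rintro _ ⟨i, rfl⟩
    exact hev i
  · have hvecMul : Tendsto (fun A : Matrix (Fin n) (Fin n) ℝ => x0 ᵥ* A) (nhds 0) (nhds 0) := by
      simpa using (continuous_const.matrix_vecMul continuous_id).tendsto (0 : Matrix _ _ ℝ)
    exact hvecMul.comp hP
end

section
/- Let G be a connected signed graph that is strictly unbalanced (neither all cycles have an even number of negative edges nor all cycles have an even number of positive edges). Then there exist vertices v_i, v_j and a positive integer ℓ such that there are two walks of length ℓ from v_i to v_j of opposite signs. -/
open SimpleGraph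

section Aux

variable {V : Type*} {G : SimpleGraph V}

private def wsign (sign : V → V → ℤ) {a b : V} (p : G.Walk a b) : ℤ :=
  (p.darts.map fun d => sign d.toProd.1 d.toProd.2).prod

private lemma wsign_append (sign : V → V → ℤ) {a b c : V} (p : G.Walk a b) (q : G.Walk b c) :
    wsign sign (p.append q) = wsign sign p * wsign sign q := by
  simp [wsign, Walk.darts_append]

private lemma wsign_reverse (sign : V → V → ℤ) (hsymm : ∀ i j, sign i j = sign j i)
    {a b : V} (p : G.Walk a b) :
    wsign sign p.reverse = wsign sign p := by
  unfold wsign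
  rw [Walk.darts_reverse, List.map_reverse, List.prod_reverse, List.map_map]
  congr 1
  apply List.map_congr_left
  intro d _
  simp only [Function.comp_apply, Dart.symm_toProd, Prod.fst_swap, Prod.snd_swap]
  exact hsymm _ _

private lemma prod_pm {α : Type*} (f : α → ℤ) (hf : ∀ a, f a = 1 ∨ f a = -1) (l : List α) :
    (l.map f).prod = (-1) ^ (l.countP fun a => f a = -1) := by
  induction l with
  | nil => simp
  | cons a l ih =>
    rcases hf a with h | h <;>
      simp [List.countP_cons, h, ih, pow_succ, mul_comm]

private lemma countP_add (f : V → V → ℤ) (hf : ∀ d : G.Dart, f d.toProd.1 d.toProd.2 = 1 ∨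
    f d.toProd.1 d.toProd.2 = -1) (l : List G.Dart) :
    l.length = (l.countP fun d => f d.toProd.1 d.toProd.2 = 1)
      + (l.countP fun d => f d.toProd.1 d.toProd.2 = -1) := by
  rw [List.length_eq_countP_add_countP (fun d => f d.toProd.1 d.toProd.2 = 1)]
  congr 1
  apply List.countP_congr
  intro d _
  rcases hf d with h | h <;> simp [h]

/-- Zig-zag walk along a single edge, of length `2 * n`. -/
private def zig {v x : V} (h : G.Adj v x) : ℕ → G.Walk v v
  | 0 => Walk.nil
  | n + 1 => Walk.cons h (Walk.cons h.symm (zig h n))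

private lemma zig_length {v x : V} (h : G.Adj v x) (n : ℕ) : (zig h n).length = 2 * n := by
  induction n with
  | zero => rfl
  | succ n ih => simp [zig, ih]; ring

private lemma zig_wsign (sign : V → V → ℤ) (hsymm : ∀ i j, sign i j = sign j i)
    (hsign : ∀ i j, G.Adj i j → sign i j = 1 ∨ sign i j = -1)
    {v x : V} (h : G.Adj v x) (n : ℕ) : wsign sign (zig h n) = 1 := by
  induction n with
  | zero => rfl
  | succ n ih =>
    have : wsign sign (zig h (n + 1)) = sign v x * (sign x v * wsign sign (zig h n)) := by
      simp [zig, wsign]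
    rw [this, ih, hsymm x v]
    rcases hsign v x h with hs | hs <;> rw [hs] <;> ring

end Aux

/-- If a connected signed graph is strictly unbalanced (not all cycles have an
even number of negative edges, and not all cycles have an even number of
positive edges), then there exist two walks of the same positive length between
some pair of vertices with opposite signs. -/
theorem strictly_unbalanced_two_walks {V : Type*} (G : SimpleGraph V)
    (hG : G.Connected)
    (sign : V → V → ℤ)
    (hsymm : ∀ i j, sign i j = sign j i)
    (hsign : ∀ i j, G.Adj i j → sign i j = 1 ∨ sign i j = -1)
    (hnotbal : ¬ ∀ (u : V) (p : G.Walk u u), p.IsCycle →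
      Even (p.darts.countP (fun d => sign d.toProd.1 d.toProd.2 = -1)))
    (hnotanti : ¬ ∀ (u : V) (p : G.Walk u u), p.IsCycle →
      Even (p.darts.countP (fun d => sign d.toProd.1 d.toProd.2 = 1))) :
    ∃ (i j : V) (p q : G.Walk i j), 0 < p.length ∧ q.length = p.length ∧
      (p.darts.map fun d => sign d.toProd.1 d.toProd.2).prod
        = -(q.darts.map fun d => sign d.toProd.1 d.toProd.2).prod := by
  push_neg at hnotbal hnotanti
  obtain ⟨u, c1, hc1, hn1⟩ := hnotbal
  obtain ⟨w, c2, hc2, hp2⟩ := hnotanti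
  rw [Nat.not_even_iff_odd] at hn1 hp2
  have hfd : ∀ d : G.Dart, sign d.toProd.1 d.toProd.2 = 1 ∨ sign d.toProd.1 d.toProd.2 = -1 :=
    fun d => hsign _ _ d.adj
  have hws : ∀ {a b : V} (p : G.Walk a b),
      wsign sign p = (-1) ^ (p.darts.countP fun d => sign d.toProd.1 d.toProd.2 = -1) :=
    fun p => prod_pm _ hfd _
  -- key: a closed walk of even positive length and sign -1
  have key : ∃ (v : V) (W : G.Walk v v), 0 < W.length ∧ Even W.length ∧ wsign sign W = -1 := by
    have hs1 : wsign sign c1 = -1 := by rw [hws c1, hn1.neg_one_pow]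
    have hlen1 : c1.length = (c1.darts.countP fun d => sign d.toProd.1 d.toProd.2 = 1)
        + (c1.darts.countP fun d => sign d.toProd.1 d.toProd.2 = -1) := by
      rw [← Walk.length_darts]; exact countP_add sign hfd c1.darts
    have hlen2 : c2.length = (c2.darts.countP fun d => sign d.toProd.1 d.toProd.2 = 1)
        + (c2.darts.countP fun d => sign d.toProd.1 d.toProd.2 = -1) := by
      rw [← Walk.length_darts]; exact countP_add sign hfd c2.darts
    by_cases he1 : Even c1.length
    · exact ⟨u, c1, by have := hc1.three_le_length; omega, he1, hs1⟩
    · by_cases he2 : Even c2.length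
      · have hn2 : Odd (c2.darts.countP fun d => sign d.toProd.1 d.toProd.2 = -1) := by
          rw [Nat.odd_iff] at hp2 ⊢
          rw [Nat.even_iff, hlen2] at he2
          omega
        exact ⟨w, c2, by have := hc2.three_le_length; omega, he2,
          by rw [hws c2, hn2.neg_one_pow]⟩
      · -- both odd lengths
        have hn2even : Even (c2.darts.countP fun d => sign d.toProd.1 d.toProd.2 = -1) := by
          rw [Nat.not_even_iff_odd, Nat.odd_iff, hlen2] at he2
          rw [Nat.odd_iff] at hp2
          rw [Nat.even_iff]
          omega
        have hs2 : wsign sign c2 = 1 := by rw [hws c2, hn2even.neg_one_pow]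
        obtain ⟨P⟩ : G.Reachable u w := hG.preconnected u w
        refine ⟨u, c1.append (P.append (c2.append P.reverse)), ?_, ?_, ?_⟩
        · have := hc1.three_le_length
          simp only [Walk.length_append]
          omega
        · simp only [Walk.length_append, Walk.length_reverse]
          rw [Nat.not_even_iff_odd, Nat.odd_iff] at he1 he2
          rw [Nat.even_iff]
          omega
        · have hsP : wsign sign P * wsign sign P = 1 := by
            rw [hws P, ← pow_add]
            exact Even.neg_one_pow ⟨_, rfl⟩
          rw [wsign_append, wsign_append, wsign_append, wsign_reverse sign hsymm,
            hs1, hs2]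
          linear_combination (-1 : ℤ) * hsP
  obtain ⟨v, W, hpos, heven, hsW⟩ := key
  have hnil : ¬ W.Nil := by
    intro h
    rw [Walk.nil_iff_length_eq] at h
    omega
  have hadj : G.Adj v (W.getVert 1) := Walk.adj_snd hnil
  obtain ⟨n, hn⟩ := heven
  refine ⟨v, v, W, zig hadj n, hpos, ?_, ?_⟩
  · rw [zig_length]; omega
  · show wsign sign W = -(wsign sign (zig hadj n))
    rw [hsW, zig_wsign sign hsymm hsign]
end
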